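/- arXiv:2508.05355 — 4 statements merged into one kernel-verified Lean document; each statement's English description precedes it below -/
import Mathlib

section
/- Security of Wegman–Carter authentication with key recycling (Theorem 1): let M be a finite type, B = Fin b_H → ZMod 2, and F a nonempty finite ε-ASU₂ family of functions M → B, i.e., for all m₁ ≠ m₂ and all b₁, b₂ ∈ B, |{f ∈ F : f(m₁) = b₁ ∧ f(m₂) = b₂}| ≤ ε·|F|/2^{b_H}. Fix n ≥ 1, messages m₁, …, m_n ∈ M, a forged message m_E ∈ M with m_E ≠ m₁, and an arbitrary (deterministic) adversary strategy G : Bⁿ → B. Then the number of keys (f, k₁, …, k_n) ∈ F × Bⁿ such that f(m_E) + k₁ = G(f(m₁)+k₁, …, f(m_n)+k_n) is at most ε·|F|·2^{n·b_H}; equivalently, the probability over a uniformly random key that Eve's guessed tag for the forged message m_E (in place of message m₁) is correct is at most ε. -/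
/-!
Reparametrise the keys `(f, k)` by the observed tags `t = f ∘ m + k`: for fixed `f` this is a
bijection of the pads, and Eve's guess is then correct iff `f mE - f m₁ = G t - t₁`. For each
fixed `t`, splitting according to the value of `f m₁` and applying the ASU₂ bound to each of the
`2 ^ bH` pairs `(f m₁, f mE)` bounds the number of such `f` by `ε |F|`; summing over the
`2 ^ (n bH)` tag vectors `t` gives the claim.
-/

open Finset

theorem card_filter_prod_univ_addLeft {X K : Type*} [AddGroup K] [Fintype K] (s : Finset X)
    (g : X → K) (P : X → K → Prop) [DecidablePred fun p : X × K => P p.1 p.2]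
    [DecidablePred fun p : X × K => P p.1 (g p.1 + p.2)] :
    #((s ×ˢ univ).filter fun p => P p.1 p.2) =
      #((s ×ˢ univ).filter fun p => P p.1 (g p.1 + p.2)) :=
  card_nbij' (fun p => (p.1, -g p.1 + p.2)) (fun p => (p.1, g p.1 + p.2))
    (by simp [Set.MapsTo]) (by simp [Set.MapsTo]) (fun _ _ => by simp) (fun _ _ => by simp)

theorem card_filter_prod_univ_eq_sum {X Y : Type*} [Fintype Y] (s : Finset X) (P : X → Y → Prop)
    [DecidablePred fun p : X × Y => P p.1 p.2] [∀ y, DecidablePred fun x => P x y] :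
    #((s ×ˢ univ).filter fun p => P p.1 p.2) = ∑ y, #(s.filter fun x => P x y) := by
  rw [card_filter, sum_product_right]
  exact sum_congr rfl fun y _ => (card_filter _ _).symm

theorem card_filter_sub_eq_le {M B : Type*} [AddCommGroup B] [Fintype B] [DecidableEq B]
    (F : Finset (M → B)) (m₁ m₂ : M) (δ : ℝ)
    (hF : ∀ b₁ b₂ : B, (#(F.filter fun f => f m₁ = b₁ ∧ f m₂ = b₂) : ℝ) ≤ δ) (c : B) :
    (#(F.filter fun f => f m₂ - f m₁ = c) : ℝ) ≤ Fintype.card B * δ := by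
  rw [card_eq_sum_card_fiberwise (f := fun f => f m₁) (t := univ) fun _ _ => mem_univ _]
  push_cast
  calc ∑ b, (#((F.filter fun f => f m₂ - f m₁ = c).filter fun f => f m₁ = b) : ℝ)
      = ∑ b, (#(F.filter fun f => f m₁ = b ∧ f m₂ = b + c) : ℝ) := by
        refine sum_congr rfl fun b _ => ?_
        rw [filter_filter]
        congr 2
        ext f
        simp only [mem_filter, sub_eq_iff_eq_add']
        constructor
        · rintro ⟨hf, h, rfl⟩; exact ⟨hf, rfl, h⟩
        · rintro ⟨hf, rfl, h⟩; exact ⟨hf, h, rfl⟩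
    _ ≤ ∑ _b : B, δ := sum_le_sum fun b _ => hF b (b + c)
    _ = Fintype.card B * δ := by simp

theorem card_substitution_success_le {M B ι : Type*} [AddCommGroup B] [Fintype B] [DecidableEq B]
    [Fintype ι] [DecidableEq ι] (F : Finset (M → B)) (m : ι → M) (i₀ : ι) (mE : M) (δ : ℝ)
    (hF : ∀ b₁ b₂ : B, (#(F.filter fun f => f (m i₀) = b₁ ∧ f mE = b₂) : ℝ) ≤ δ)
    (G : (ι → B) → B) :
    (#((F ×ˢ (univ : Finset (ι → B))).filter fun p =>
        p.1 mE + p.2 i₀ = G fun i => p.1 (m i) + p.2 i) : ℝ) ≤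
      Fintype.card B ^ Fintype.card ι * (Fintype.card B * δ) := by
  rw [card_filter_prod_univ_addLeft F (fun f i => -f (m i))
    (fun f k => f mE + k i₀ = G fun i => f (m i) + k i)]
  simp only [Pi.add_apply, add_neg_cancel_left]
  rw [card_filter_prod_univ_eq_sum F (fun f t => f mE + (-f (m i₀) + t i₀) = G t)]
  push_cast
  calc ∑ t : ι → B, (#(F.filter fun f => f mE + (-f (m i₀) + t i₀) = G t) : ℝ)
      = ∑ t : ι → B, (#(F.filter fun f => f mE - f (m i₀) = G t - t i₀) : ℝ) := by
        refine sum_congr rfl fun t _ => ?_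
        congr 2
        ext f
        rw [mem_filter, mem_filter, eq_sub_iff_add_eq, sub_eq_add_neg, add_assoc]
    _ ≤ ∑ _t : ι → B, (Fintype.card B * δ) :=
        sum_le_sum fun t _ => card_filter_sub_eq_le F (m i₀) mE δ hF _
    _ = Fintype.card B ^ Fintype.card ι * (Fintype.card B * δ) := by simp

theorem wegman_carter_security_general {M : Type*} (bH : ℕ)
    (F : Finset (M → (Fin bH → ZMod 2))) (ε : ℝ)
    (hASU : ∀ m₁ m₂ : M, m₁ ≠ m₂ → ∀ b₁ b₂ : Fin bH → ZMod 2,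
      ((F.filter (fun f => f m₁ = b₁ ∧ f m₂ = b₂)).card : ℝ) ≤ ε * F.card / 2 ^ bH)
    (n : ℕ) (hn : 0 < n) (m : Fin n → M) (mE : M) (hmE : mE ≠ m ⟨0, hn⟩)
    (G : (Fin n → (Fin bH → ZMod 2)) → (Fin bH → ZMod 2)) :
    (((F ×ˢ (Finset.univ : Finset (Fin n → (Fin bH → ZMod 2)))).filter
        (fun p => p.1 mE + p.2 ⟨0, hn⟩ =
          G (fun i => p.1 (m i) + p.2 i))).card : ℝ)
      ≤ ε * F.card * 2 ^ (n * bH) := by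
  have hcard : (Fintype.card (Fin bH → ZMod 2) : ℝ) = 2 ^ bH := by simp
  refine (card_substitution_success_le F m ⟨0, hn⟩ mE _ (hASU _ _ hmE.symm) G).trans_eq ?_
  rw [Fintype.card_fin, hcard, mul_div_cancel₀ _ (by positivity), ← pow_mul, mul_comm bH]
  ring

/-- Security of Wegman–Carter authentication with key recycling: against an
ε-ASU₂ family with one-time-pad encrypted tags, any deterministic substitution
strategy for the first message succeeds for at most ε·|F|·2^{n·b_H} of the keys
(f, k₁, …, k_n) ∈ F × Bⁿ, i.e., with probability at most ε over a uniform key. -/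
theorem wegman_carter_security {M : Type*} [Fintype M] (bH : ℕ) (hbH : 0 < bH)
    (F : Finset (M → (Fin bH → ZMod 2))) (hF : F.Nonempty) (ε : ℝ)
    (hASU : ∀ m₁ m₂ : M, m₁ ≠ m₂ → ∀ b₁ b₂ : Fin bH → ZMod 2,
      ((F.filter (fun f => f m₁ = b₁ ∧ f m₂ = b₂)).card : ℝ) ≤ ε * F.card / 2 ^ bH)
    (n : ℕ) (hn : 0 < n) (m : Fin n → M) (mE : M) (hmE : mE ≠ m ⟨0, hn⟩)
    (G : (Fin n → (Fin bH → ZMod 2)) → (Fin bH → ZMod 2)) :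
    (((F ×ˢ (Finset.univ : Finset (Fin n → (Fin bH → ZMod 2)))).filter
        (fun p => p.1 mE + p.2 ⟨0, hn⟩ =
          G (fun i => p.1 (m i) + p.2 i))).card : ℝ)
      ≤ ε * F.card * 2 ^ (n * bH) :=
  wegman_carter_security_general bH F ε hASU n hn m mE hmE G
end

section
/- Security of authentication with an ε-AXU₂ family, one-time-pad encrypted tags and key recycling: let M be a finite type, B = Fin b_H → ZMod 2, and F a nonempty finite ε-AXU₂ family of functions M → B, i.e., for all m₁ ≠ m₂ in M and all b ∈ B, |{f ∈ F : f(m₁) + f(m₂) = b}| ≤ ε·|F|. Fix n ≥ 1, messages m₁, …, m_n ∈ M, a forged message m' ∈ M with m' ≠ m₁, and an arbitrary adversary strategy G : Bⁿ → B. Then the number of keys (f, r₁, …, r_n) ∈ F × Bⁿ such that f(m') + r₁ = G(f(m₁)+r₁, …, f(m_n)+r_n) is at most ε·|F|·2^{n·b_H}; equivalently, the probability over a uniformly random key that the adversary's guessed tag for the substituted message m' (in place of m₁) is correct is at most ε. -/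
/-!
Substituting `t = f ∘ m + r` (for fixed `f`, a bijection `r ↦ t` of `Bⁿ`) turns the success
condition `f m' + r₁ = G (f ∘ m + r)` into `f m' - f m₁ = G t - t₁`. For each observed tag vector
`t` this is an ε-AXU₂ event in `f` alone (over `ZMod 2`, `-` is `+`), so each of the `|B|ⁿ`
values of `t` accounts for at most `ε·|F|` keys.
-/

open Finset

section OneTimePad

variable {α ι B : Type*} [Fintype ι] [DecidableEq ι] [AddCommGroup B] [Fintype B] [DecidableEq B]

theorem card_filter_otp_forgery_eq_sum (F : Finset (α → B)) (m : ι → α) (i₀ : ι) (m' : α)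
    (G : (ι → B) → B) :
    #{p ∈ F ×ˢ (univ : Finset (ι → B)) | p.1 m' + p.2 i₀ = G (fun i => p.1 (m i) + p.2 i)} =
      ∑ t : ι → B, #{f ∈ F | f m' - f (m i₀) = G t - t i₀} := by
  simp only [card_filter, sum_product]
  rw [sum_comm (s := univ)]
  refine sum_congr rfl fun f _ => ?_
  refine Fintype.sum_equiv (Equiv.addLeft (fun i => f (m i))) _ _ fun r => ?_
  simp only [Equiv.coe_addLeft, Pi.add_apply, add_comm (f (m i₀)), ← sub_sub, eq_sub_iff_add_eq,
    sub_add_cancel]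
  rfl

theorem card_filter_otp_forgery_le (F : Finset (α → B)) (ε : ℝ) (m : ι → α) (i₀ : ι) (m' : α)
    (hdiff : ∀ b : B, (#{f ∈ F | f m' - f (m i₀) = b} : ℝ) ≤ ε * #F) (G : (ι → B) → B) :
    (#{p ∈ F ×ˢ (univ : Finset (ι → B)) | p.1 m' + p.2 i₀ = G (fun i => p.1 (m i) + p.2 i)} : ℝ) ≤
      ε * #F * Fintype.card (ι → B) := by
  rw [card_filter_otp_forgery_eq_sum, Nat.cast_sum]
  calc ∑ t : ι → B, (#{f ∈ F | f m' - f (m i₀) = G t - t i₀} : ℝ)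
      ≤ ∑ _t : ι → B, ε * #F := sum_le_sum fun t _ => hdiff _
    _ = ε * #F * Fintype.card (ι → B) := by rw [sum_const, card_univ, nsmul_eq_mul, mul_comm]

end OneTimePad

theorem axu2_otp_authentication_security_general {M : Type*} (bH : ℕ)
    (F : Finset (M → (Fin bH → ZMod 2))) (ε : ℝ)
    (hAXU : ∀ m₁ m₂ : M, m₁ ≠ m₂ → ∀ b : Fin bH → ZMod 2,
      ((F.filter (fun f => f m₁ + f m₂ = b)).card : ℝ) ≤ ε * F.card)
    (n : ℕ) (hn : 0 < n) (m : Fin n → M) (m' : M) (hm' : m' ≠ m ⟨0, hn⟩)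
    (G : (Fin n → (Fin bH → ZMod 2)) → (Fin bH → ZMod 2)) :
    (((F ×ˢ (Finset.univ : Finset (Fin n → (Fin bH → ZMod 2)))).filter
        (fun p => p.1 m' + p.2 ⟨0, hn⟩ =
          G (fun i => p.1 (m i) + p.2 i))).card : ℝ)
      ≤ ε * F.card * 2 ^ (n * bH) := by
  have hcard : Fintype.card (Fin n → Fin bH → ZMod 2) = (2 : ℝ) ^ (n * bH) := by
    simp [pow_mul']
  rw [← hcard]
  refine card_filter_otp_forgery_le F ε m _ m' (fun b => ?_) G
  simpa only [ZModModule.sub_eq_add] using hAXU m' _ hm' b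

/-- Security of authentication with an ε-AXU₂ family, one-time-pad encrypted
tags and key recycling: any deterministic substitution strategy for the first
message succeeds for at most ε·|F|·2^{n·b_H} of the keys
(f, r₁, …, r_n) ∈ F × Bⁿ, i.e., with probability at most ε over a uniform key. -/
theorem axu2_otp_authentication_security {M : Type*} [Fintype M] (bH : ℕ) (hbH : 0 < bH)
    (F : Finset (M → (Fin bH → ZMod 2))) (hF : F.Nonempty) (ε : ℝ)
    (hAXU : ∀ m₁ m₂ : M, m₁ ≠ m₂ → ∀ b : Fin bH → ZMod 2,
      ((F.filter (fun f => f m₁ + f m₂ = b)).card : ℝ) ≤ ε * F.card)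
    (n : ℕ) (hn : 0 < n) (m : Fin n → M) (m' : M) (hm' : m' ≠ m ⟨0, hn⟩)
    (G : (Fin n → (Fin bH → ZMod 2)) → (Fin bH → ZMod 2)) :
    (((F ×ˢ (Finset.univ : Finset (Fin n → (Fin bH → ZMod 2)))).filter
        (fun p => p.1 m' + p.2 ⟨0, hn⟩ =
          G (fun i => p.1 (m i) + p.2 i))).card : ℝ)
      ≤ ε * F.card * 2 ^ (n * bH) :=
  axu2_otp_authentication_security_general bH F ε hAXU n hn m m' hm' G
end

section
/- Annihilation of linearly recurrent sequences by multiples of the characteristic polynomial: let d ≥ 1, let p ∈ (ZMod 2)[X] be a monic polynomial of degree d with coefficients p_i (i < d), and let s : ℕ → ZMod 2 be a sequence satisfying the linear recurrence s(l + d) = ∑_{i=0}^{d-1} p_i · s(l + i) for all l ∈ ℕ. If m ∈ (ZMod 2)[X] is any polynomial divisible by p, then for every shift k ∈ ℕ, ∑_{i=0}^{deg m} m_i · s(k + i) = 0, where m_i denotes the coefficient of X^i in m. -/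
open Polynomial Finset

private noncomputable def Lfun (s : ℕ → ZMod 2) (k : ℕ) (f : Polynomial (ZMod 2)) : ZMod 2 :=
  f.sum (fun i a => a * s (k + i))

private lemma Lfun_eq (s : ℕ → ZMod 2) (k : ℕ) (f : Polynomial (ZMod 2)) :
    Lfun s k f = ∑ i ∈ Finset.range (f.natDegree + 1), f.coeff i * s (k + i) :=
  Polynomial.sum_over_range f (fun n => zero_mul _)

private lemma Lfun_add (s : ℕ → ZMod 2) (k : ℕ) (f g : Polynomial (ZMod 2)) :
    Lfun s k (f + g) = Lfun s k f + Lfun s k g := by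
  unfold Lfun
  apply Polynomial.sum_add_index <;> intros <;> ring

private lemma Lfun_mul_X (s : ℕ → ZMod 2) (k : ℕ) (f : Polynomial (ZMod 2)) :
    Lfun s k (f * X) = Lfun s (k + 1) f := by
  rcases eq_or_ne f 0 with rfl | hf
  · simp [Lfun]
  rw [Lfun_eq, Lfun_eq, Polynomial.natDegree_mul_X hf, Finset.sum_range_succ']
  simp only [Polynomial.coeff_mul_X, Polynomial.coeff_mul_X_zero, zero_mul, add_zero]
  apply Finset.sum_congr rfl
  intro i _
  have h : k + (i + 1) = k + 1 + i := by omega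
  rw [h]

private lemma Lfun_mul_X_pow (s : ℕ → ZMod 2) (k j : ℕ) (f : Polynomial (ZMod 2)) :
    Lfun s k (f * X ^ j) = Lfun s (k + j) f := by
  induction j generalizing k with
  | zero => simp
  | succ n ih =>
    rw [pow_succ, ← mul_assoc, Lfun_mul_X, ih]
    congr 1
    omega

/-- Annihilation of linearly recurrent sequences by multiples of the
characteristic polynomial: if `s` satisfies the linear recurrence with monic
characteristic polynomial `p` of degree `d ≥ 1` over GF(2), then every
polynomial `m` divisible by `p` annihilates every shifted window of `s`. -/
theorem lfsr_annihilation (d : ℕ) (hd : 1 ≤ d)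
    (p : Polynomial (ZMod 2)) (hmonic : p.Monic) (hdeg : p.natDegree = d)
    (s : ℕ → ZMod 2)
    (hrec : ∀ l : ℕ, s (l + d) = ∑ i ∈ Finset.range d, p.coeff i * s (l + i))
    (m : Polynomial (ZMod 2)) (hdvd : p ∣ m) :
    ∀ k : ℕ, ∑ i ∈ Finset.range (m.natDegree + 1), m.coeff i * s (k + i) = 0 := by
  have hp : ∀ k : ℕ, Lfun s k p = 0 := by
    intro k
    rw [Lfun_eq, hdeg, Finset.sum_range_succ]
    have hc : p.coeff d = 1 := by
      have := hmonic.coeff_natDegree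
      rwa [hdeg] at this
    have h2 : ∑ i ∈ Finset.range d, p.coeff i * s (k + i) = s (k + d) := (hrec k).symm
    rw [h2, hc, one_mul]
    exact CharTwo.add_self_eq_zero _
  intro k
  obtain ⟨q, rfl⟩ := hdvd
  rw [← Lfun_eq]
  induction q using Polynomial.induction_on' generalizing k with
  | add f g hf hg => rw [mul_add, Lfun_add, hf, hg, add_zero]
  | monomial n a =>
    rw [← Polynomial.C_mul_X_pow_eq_monomial]
    have : p * (Polynomial.C a * X ^ n) = (Polynomial.C a * p) * X ^ n := by ring
    rw [this, Lfun_mul_X_pow]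
    rcases eq_or_ne a 0 with rfl | ha
    · simp [Lfun]
    · have ha1 : a = 1 := by revert ha; generalize a = b; revert b; decide
      rw [ha1, Polynomial.C_1, one_mul, hp]
end

section
/- Existence of nontrivial messages hashing to zero under LFSR-based Toeplitz hashing for every initial state (core of Lemma 3): let b_H ≥ 1 and b_M > b_H be natural numbers and let p ∈ (ZMod 2)[X] be a monic polynomial of degree b_H with coefficients p_i (i < b_H). Then there exists a nonzero polynomial m ∈ (ZMod 2)[X] of degree at most b_M such that for every sequence s : ℕ → ZMod 2 satisfying s(l + b_H) = ∑_{i=0}^{b_H-1} p_i · s(l + i) for all l, and for every shift k ∈ ℕ, one has ∑_{i=0}^{deg m} m_i · s(k + i) = 0, where m_i is the coefficient of X^i in m. In particular, m can be chosen as m = p·g for any nonzero g of degree b_M − b_H. -/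
/-!
A message polynomial `m = ∑ mᵢ Xⁱ` acts on sequences as the operator `m(E)`, where `E` is the
left shift, and the `k`-th window sum `∑ mᵢ s(k + i)` is `(m(E) s) k`. Over GF(2) the LFSR
recurrence says exactly that `p(E) s = 0`, and since `m ↦ m(E)` is multiplicative,
`(p g)(E) s = g(E) (p(E) s) = 0` for every `g`.
-/

open Polynomial Finset

section SeqShift

variable (R : Type*) [CommSemiring R]

def seqShift : Module.End R (ℕ → R) := LinearMap.funLeft R R (· + 1)

variable {R}

theorem seqShift_pow_apply (i : ℕ) (s : ℕ → R) (k : ℕ) : (seqShift R ^ i) s k = s (k + i) := by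
  induction i generalizing k with
  | zero => rfl
  | succ i ih =>
    rw [pow_succ', Module.End.mul_apply]
    exact (ih (k + 1)).trans (congrArg s (by omega))

theorem aeval_seqShift_apply (m : R[X]) (s : ℕ → R) (k : ℕ) :
    aeval (seqShift R) m s k = ∑ i ∈ range (m.natDegree + 1), m.coeff i * s (k + i) := by
  simp only [aeval_eq_sum_range, LinearMap.sum_apply, Finset.sum_apply, LinearMap.smul_apply,
    Pi.smul_apply, seqShift_pow_apply, smul_eq_mul]

theorem aeval_seqShift_mul_eq_zero {p : R[X]} {s : ℕ → R} (hs : aeval (seqShift R) p s = 0)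
    (g : R[X]) : aeval (seqShift R) (p * g) s = 0 := by
  rw [mul_comm, map_mul, Module.End.mul_apply, hs, map_zero]

end SeqShift

theorem aeval_seqShift_eq_zero_of_recurrence {R : Type*} [CommRing R] [CharP R 2] {p : R[X]}
    (hp : p.Monic) {s : ℕ → R}
    (hs : ∀ l, s (l + p.natDegree) = ∑ i ∈ range p.natDegree, p.coeff i * s (l + i)) :
    aeval (seqShift R) p s = 0 := by
  ext k
  rw [aeval_seqShift_apply, sum_range_succ, coeff_natDegree, hp.leadingCoeff, one_mul, hs k]
  exact CharTwo.add_self_eq_zero _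

theorem lfsr_toeplitz_forgery_general (bH bM : ℕ) (hbM : bH < bM)
    (p : Polynomial (ZMod 2)) (hmonic : p.Monic) (hdeg : p.natDegree = bH) :
    (∃ m : Polynomial (ZMod 2), m ≠ 0 ∧ m.natDegree ≤ bM ∧
      ∀ s : ℕ → ZMod 2,
        (∀ l : ℕ, s (l + bH) = ∑ i ∈ Finset.range bH, p.coeff i * s (l + i)) →
        ∀ k : ℕ, ∑ i ∈ Finset.range (m.natDegree + 1), m.coeff i * s (k + i) = 0) ∧
    (∀ g : Polynomial (ZMod 2), g ≠ 0 → g.natDegree = bM - bH →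
      p * g ≠ 0 ∧ (p * g).natDegree ≤ bM ∧
      ∀ s : ℕ → ZMod 2,
        (∀ l : ℕ, s (l + bH) = ∑ i ∈ Finset.range bH, p.coeff i * s (l + i)) →
        ∀ k : ℕ, ∑ i ∈ Finset.range ((p * g).natDegree + 1),
          (p * g).coeff i * s (k + i) = 0) := by
  subst hdeg
  have multiple : ∀ g : Polynomial (ZMod 2), g ≠ 0 → g.natDegree = bM - p.natDegree →
      p * g ≠ 0 ∧ (p * g).natDegree ≤ bM ∧
      ∀ s : ℕ → ZMod 2,
        (∀ l : ℕ, s (l + p.natDegree) = ∑ i ∈ range p.natDegree, p.coeff i * s (l + i)) →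
        ∀ k : ℕ, ∑ i ∈ range ((p * g).natDegree + 1), (p * g).coeff i * s (k + i) = 0 := by
    intro g hg hgdeg
    refine ⟨mul_ne_zero hmonic.ne_zero hg, by rw [hmonic.natDegree_mul' hg]; omega, ?_⟩
    intro s hs k
    rw [← aeval_seqShift_apply,
      aeval_seqShift_mul_eq_zero (aeval_seqShift_eq_zero_of_recurrence hmonic hs)]
    rfl
  obtain ⟨hne, hle, hzero⟩ := multiple (X ^ (bM - p.natDegree)) (pow_ne_zero _ X_ne_zero)
    (natDegree_X_pow _)
  exact ⟨⟨_, hne, hle, hzero⟩, multiple⟩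

/-- Existence of nontrivial messages hashing to zero under LFSR-based Toeplitz
hashing, regardless of the initial state (core of Lemma 3): for a monic
connection polynomial `p` of degree `b_H` over GF(2) and any `b_M > b_H`,
there is a nonzero message polynomial `m` of degree at most `b_M` annihilating
every window of every sequence generated by the LFSR; in particular, `m` can
be chosen as `p * g` for any nonzero `g` of degree `b_M − b_H`. -/
theorem lfsr_toeplitz_forgery (bH bM : ℕ) (hbH : 1 ≤ bH) (hbM : bH < bM)
    (p : Polynomial (ZMod 2)) (hmonic : p.Monic) (hdeg : p.natDegree = bH) :
    (∃ m : Polynomial (ZMod 2), m ≠ 0 ∧ m.natDegree ≤ bM ∧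
      ∀ s : ℕ → ZMod 2,
        (∀ l : ℕ, s (l + bH) = ∑ i ∈ Finset.range bH, p.coeff i * s (l + i)) →
        ∀ k : ℕ, ∑ i ∈ Finset.range (m.natDegree + 1), m.coeff i * s (k + i) = 0) ∧
    (∀ g : Polynomial (ZMod 2), g ≠ 0 → g.natDegree = bM - bH →
      p * g ≠ 0 ∧ (p * g).natDegree ≤ bM ∧
      ∀ s : ℕ → ZMod 2,
        (∀ l : ℕ, s (l + bH) = ∑ i ∈ Finset.range bH, p.coeff i * s (l + i)) →
        ∀ k : ℕ, ∑ i ∈ Finset.range ((p * g).natDegree + 1),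
          (p * g).coeff i * s (k + i) = 0) :=
  lfsr_toeplitz_forgery_general bH bM hbM p hmonic hdeg
end
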